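/- arXiv:2312.08407 — 4 statements merged into one kernel-verified Lean document; each statement's English description precedes it below -/
import Mathlib

section
/- Let 1 ≤ p < ∞, let ρ : [0,1] → ℝ be continuous, and let y ∈ (0,1). Then the functions G_y(ρ) and H_y(ρ) are differentiable on (0,1) and max{‖(G_y(ρ))′‖_p, ‖(H_y(ρ))′‖_p} ≤ (3/y) τ(ρ, y)_p. (Lemma 3.1, second part.) -/
/-!
With `a = (1 - y) x` and `F = ρ ± ω(ρ, ·, y)`, the substitution `s = (1 - y) x + y t` gives
`G_y(ρ, x) = y⁻¹ ∫_a^{a + y} F`, hence `G_y(ρ)' x = ((1 - y) / y) (F (a + y) - F a)`.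
Both `a` and `a + y` lie in the window around `a`, so `|ρ (a + y) - ρ a| ≤ ω(a)`, while
`|ω(a + y) - ω(a)| ≤ ω(a) + ω(a + y)`. Minkowski's inequality and the substitutions
`x ↦ (1 - y) x` and `x ↦ (1 - y) x + y`, each costing a factor `(1 - y)^(-1/p)`, then give
`‖G_y(ρ)'‖_p ≤ 3 (1 - y)^(1 - 1/p) τ(ρ, y)_p / y ≤ 3 τ(ρ, y)_p / y`.

To use the fundamental theorem of calculus, `ρ` is extended to `ℝ` by `IccExtend`, and on
`[0, 1]` the modulus `ω(ρ, ·, y)` is the oscillation of this extension on windows, which is a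
continuous function on all of `ℝ`.
-/

open MeasureTheory Set Real

/-- Local modulus of continuity of `ρ` at `x` with radius `δ`, relative to `[0,1]`. -/
noncomputable def omegaMod (ρ : ℝ → ℝ) (x δ : ℝ) : ℝ :=
  sSup {d : ℝ | ∃ u ∈ Icc (x - δ) (x + δ) ∩ Icc (0:ℝ) 1,
    ∃ v ∈ Icc (x - δ) (x + δ) ∩ Icc (0:ℝ) 1, d = |ρ u - ρ v|}

/-- One-sided operator `G_y`. -/
noncomputable def Gop (y : ℝ) (ρ : ℝ → ℝ) (x : ℝ) : ℝ :=
  ∫ t in (0:ℝ)..1, (ρ ((1 - y) * x + y * t) - omegaMod ρ ((1 - y) * x + y * t) y)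

/-- One-sided operator `H_y`. -/
noncomputable def Hop (y : ℝ) (ρ : ℝ → ℝ) (x : ℝ) : ℝ :=
  ∫ t in (0:ℝ)..1, (ρ ((1 - y) * x + y * t) + omegaMod ρ ((1 - y) * x + y * t) y)

/-- `L^p` norm on `[0,1]`. -/
noncomputable def lpNorm (p : ℝ) (f : ℝ → ℝ) : ℝ :=
  (∫ x in (0:ℝ)..1, |f x| ^ p) ^ (1 / p)

/-- Averaged modulus of smoothness `τ(ρ, δ)_p`. -/
noncomputable def tau (p : ℝ) (ρ : ℝ → ℝ) (δ : ℝ) : ℝ :=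
  lpNorm p (fun x => omegaMod ρ x δ)

/-- The step function `Φ`. -/
noncomputable def stepPhi (x : ℝ) : ℝ := if 0 < x then 1 else 0

/-- Operator `M_k` built from polynomials `P ≤ Φ ≤ Q`, applied to `f` with
`f x = f 0 + ∫_0^x g`. -/
noncomputable def Mop (P Q : Polynomial ℝ) (f0 : ℝ) (g : ℝ → ℝ) (x : ℝ) : ℝ :=
  f0 + (∫ t in (0:ℝ)..1, P.eval (x - t) * max (g t) 0)
     - ∫ t in (0:ℝ)..1, Q.eval (x - t) * max (-g t) 0

/-- Operator `N_k` built from polynomials `P ≤ Φ ≤ Q`, applied to `f` with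
`f x = f 0 + ∫_0^x g`. -/
noncomputable def Nop (P Q : Polynomial ℝ) (f0 : ℝ) (g : ℝ → ℝ) (x : ℝ) : ℝ :=
  f0 + (∫ t in (0:ℝ)..1, Q.eval (x - t) * max (g t) 0)
     - ∫ t in (0:ℝ)..1, P.eval (x - t) * max (-g t) 0

/-- Degree of best one-sided approximation by polynomials of degree at most `k`. -/
noncomputable def bestE (p : ℝ) (k : ℕ) (ρ : ℝ → ℝ) : ℝ :=
  sInf {c : ℝ | ∃ P Q : Polynomial ℝ, P.natDegree ≤ k ∧ Q.natDegree ≤ k ∧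
    (∀ x ∈ Icc (0:ℝ) 1, P.eval x ≤ ρ x ∧ ρ x ≤ Q.eval x) ∧
    c = lpNorm p (fun x => Q.eval x - P.eval x)}


section LpNorm

lemma lpNorm_nonneg (p : ℝ) (f : ℝ → ℝ) : 0 ≤ lpNorm p f :=
  rpow_nonneg (intervalIntegral.integral_nonneg zero_le_one fun _ _ => by positivity) _

lemma lpNorm_eq_lpNorm_restrict_Ioc {p : ℝ} (hp : 0 < p) {f : ℝ → ℝ}
    (hf : AEStronglyMeasurable f (volume.restrict (Ioc (0:ℝ) 1))) :
    lpNorm p f = MeasureTheory.lpNorm f (ENNReal.ofReal p) (volume.restrict (Ioc (0:ℝ) 1)) := by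
  rw [MeasureTheory.lpNorm_eq_integral_norm_rpow_toReal (by simpa using hp)
    ENNReal.ofReal_ne_top hf, _root_.lpNorm, intervalIntegral.integral_of_le zero_le_one,
    ENNReal.toReal_ofReal hp.le, one_div]
  rfl

lemma Continuous.memLp_restrict_Ioc {g : ℝ → ℝ} (hg : Continuous g) (p : ENNReal) :
    MemLp g p (volume.restrict (Ioc (0:ℝ) 1)) := by
  obtain ⟨C, hC⟩ := (isCompact_Icc (a := (0:ℝ)) (b := 1)).exists_bound_of_continuousOn
    hg.continuousOn
  exact .of_bound hg.aestronglyMeasurable C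
    (ae_restrict_of_forall_mem measurableSet_Ioc fun x hx => hC x (Ioc_subset_Icc_self hx))

lemma lpNorm_le_of_abs_le {p : ℝ} (hp : 0 < p) {f g : ℝ → ℝ} (hf : Measurable f)
    (hg : Continuous g) (hfg : ∀ x ∈ Ioo (0:ℝ) 1, |f x| ≤ g x) : lpNorm p f ≤ lpNorm p g := by
  rw [lpNorm_eq_lpNorm_restrict_Ioc hp hf.aestronglyMeasurable,
    lpNorm_eq_lpNorm_restrict_Ioc hp hg.aestronglyMeasurable,
    ← toReal_eLpNorm hf.aestronglyMeasurable, ← toReal_eLpNorm hg.aestronglyMeasurable]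
  refine ENNReal.toReal_mono (hg.memLp_restrict_Ioc _).eLpNorm_ne_top (eLpNorm_mono_ae_real ?_)
  rw [← restrict_Ioo_eq_restrict_Ioc]
  exact ae_restrict_of_forall_mem measurableSet_Ioo hfg

lemma lpNorm_add_le {p : ℝ} (hp : 1 ≤ p) {f g : ℝ → ℝ} (hf : Continuous f) (hg : Continuous g) :
    lpNorm p (f + g) ≤ lpNorm p f + lpNorm p g := by
  have hp0 : 0 < p := by linarith
  rw [lpNorm_eq_lpNorm_restrict_Ioc hp0 (hf.add hg).aestronglyMeasurable,
    lpNorm_eq_lpNorm_restrict_Ioc hp0 hf.aestronglyMeasurable,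
    lpNorm_eq_lpNorm_restrict_Ioc hp0 hg.aestronglyMeasurable]
  exact MeasureTheory.lpNorm_add_le (hf.memLp_restrict_Ioc _) (by simpa using hp)

lemma lpNorm_const_mul {p : ℝ} (hp : 0 < p) (c : ℝ) (f : ℝ → ℝ) :
    lpNorm p (fun x => c * f x) = |c| * lpNorm p f := by
  simp only [_root_.lpNorm, abs_mul, mul_rpow (abs_nonneg c) (abs_nonneg _),
    intervalIntegral.integral_const_mul]
  rw [mul_rpow (by positivity)
    (intervalIntegral.integral_nonneg zero_le_one fun _ _ => by positivity),
    ← rpow_mul (abs_nonneg c), mul_one_div_cancel hp.ne', rpow_one]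

lemma lpNorm_comp_affine_le {p : ℝ} (hp : 0 < p) {w : ℝ → ℝ} (hw : Continuous w)
    {c d : ℝ} (hc : 0 < c) (hd : 0 ≤ d) (hcd : c + d ≤ 1) :
    lpNorm p (fun x => w (c * x + d)) ≤ c⁻¹ ^ (1 / p) * lpNorm p w := by
  have hchange : ∫ x in (0:ℝ)..1, |w (c * x + d)| ^ p = c⁻¹ * ∫ u in d..c + d, |w u| ^ p := by
    simpa using intervalIntegral.integral_comp_mul_add (a := 0) (b := 1)
      (fun u => |w u| ^ p) hc.ne' d
  have hsub : ∫ u in d..c + d, |w u| ^ p ≤ ∫ u in (0:ℝ)..1, |w u| ^ p :=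
    intervalIntegral.integral_mono_interval hd (by linarith) hcd
      (.of_forall fun _ => by positivity)
      ((hw.abs.rpow_const fun _ => Or.inr hp.le).intervalIntegrable 0 1)
  rw [_root_.lpNorm, _root_.lpNorm, hchange, ← mul_rpow (by positivity)
    (intervalIntegral.integral_nonneg zero_le_one fun _ _ => by positivity)]
  gcongr
  exact mul_nonneg (by positivity)
    (intervalIntegral.integral_nonneg (by linarith) fun _ _ => by positivity)

end LpNorm

section Oscillation

-- Offsets range over a fixed compact square, so that `IsCompact.continuous_sSup` applies.
noncomputable def windowOsc (g : ℝ → ℝ) (δ x : ℝ) : ℝ :=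
  sSup ((fun q : ℝ × ℝ => |g (x + q.1) - g (x + q.2)|) '' (Icc (-δ) δ ×ˢ Icc (-δ) δ))

variable {g : ℝ → ℝ} {δ : ℝ}

lemma continuous_windowOsc (hg : Continuous g) (δ : ℝ) : Continuous (windowOsc g δ) :=
  (isCompact_Icc.prod isCompact_Icc).continuous_sSup (by fun_prop)

lemma abs_sub_le_windowOsc (hg : Continuous g) {x u v : ℝ} (hu : u ∈ Icc (x - δ) (x + δ))
    (hv : v ∈ Icc (x - δ) (x + δ)) : |g u - g v| ≤ windowOsc g δ x := by
  refine le_csSup ((isCompact_Icc.prod isCompact_Icc).bddAbove_image (by fun_prop))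
    ⟨(u - x, v - x), ⟨⟨?_, ?_⟩, ⟨?_, ?_⟩⟩, ?_⟩
  all_goals first | linarith [hu.1, hu.2, hv.1, hv.2] | simp

lemma windowOsc_nonneg (hg : Continuous g) (hδ : 0 ≤ δ) (x : ℝ) : 0 ≤ windowOsc g δ x :=
  (abs_nonneg _).trans (abs_sub_le_windowOsc hg (u := x) (v := x)
    ⟨by linarith, by linarith⟩ ⟨by linarith, by linarith⟩)

lemma abs_add_mul_windowOsc_sub_le (hg : Continuous g) (hδ : 0 ≤ δ) {ε : ℝ}
    (hε : |ε| ≤ 1) (a : ℝ) :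
    |(g (a + δ) + ε * windowOsc g δ (a + δ)) - (g a + ε * windowOsc g δ a)| ≤
      2 * windowOsc g δ a + windowOsc g δ (a + δ) := by
  have hg_sub : |g (a + δ) - g a| ≤ windowOsc g δ a :=
    abs_sub_le_windowOsc hg ⟨by linarith, le_rfl⟩ ⟨by linarith, by linarith⟩
  have hw_sub : |ε * (windowOsc g δ (a + δ) - windowOsc g δ a)| ≤
      windowOsc g δ (a + δ) + windowOsc g δ a := by
    rw [abs_mul]
    refine (mul_le_of_le_one_left (abs_nonneg _) hε).trans (abs_sub_le_iff.2 ⟨?_, ?_⟩) <;>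
      linarith [windowOsc_nonneg hg hδ a, windowOsc_nonneg hg hδ (a + δ)]
  calc |(g (a + δ) + ε * windowOsc g δ (a + δ)) - (g a + ε * windowOsc g δ a)|
      = |(g (a + δ) - g a) + ε * (windowOsc g δ (a + δ) - windowOsc g δ a)| := by congr 1; ring
    _ ≤ _ := abs_add_le _ _
    _ ≤ _ := by linarith

noncomputable def extendUnit (ρ : ℝ → ℝ) : ℝ → ℝ :=
  IccExtend zero_le_one ((Icc (0:ℝ) 1).domRestrict ρ)

lemma continuous_extendUnit {ρ : ℝ → ℝ} (hρ : ContinuousOn ρ (Icc (0:ℝ) 1)) :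
    Continuous (extendUnit ρ) :=
  hρ.domRestrict.Icc_extend'

lemma extendUnit_of_mem (ρ : ℝ → ℝ) {x : ℝ} (hx : x ∈ Icc (0:ℝ) 1) : extendUnit ρ x = ρ x :=
  IccExtend_of_mem _ _ hx

lemma omegaMod_eq_windowOsc (ρ : ℝ → ℝ) {x : ℝ} (hx : x ∈ Icc (0:ℝ) 1) :
    omegaMod ρ x δ = windowOsc (extendUnit ρ) δ x := by
  rw [omegaMod, windowOsc]
  congr 1
  ext d
  constructor
  · rintro ⟨u, ⟨hu, hu01⟩, v, ⟨hv, hv01⟩, rfl⟩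
    refine ⟨(u - x, v - x), ⟨⟨?_, ?_⟩, ⟨?_, ?_⟩⟩, ?_⟩
    all_goals first
      | linarith [hu.1, hu.2, hv.1, hv.2]
      | simp [extendUnit_of_mem ρ hu01, extendUnit_of_mem ρ hv01]
  · rintro ⟨⟨s, t⟩, ⟨hs, ht⟩, rfl⟩
    have hproj : ∀ r ∈ Icc (-δ) δ,
        (projIcc (0:ℝ) 1 zero_le_one (x + r) : ℝ) ∈ Icc (x - δ) (x + δ) ∩ Icc 0 1 := by
      intro r hr
      have hdist := abs_projIcc_sub_projIcc (h := zero_le_one) (c := x + r) (d := x)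
      rw [projIcc_of_mem _ hx, add_sub_cancel_left] at hdist
      have := abs_le.1 (hdist.trans (abs_le.2 hr))
      exact ⟨⟨by linarith, by linarith⟩, Subtype.prop _⟩
    exact ⟨_, hproj s hs, _, hproj t ht, rfl⟩

end Oscillation

lemma hasDerivAt_integral_comp_affine {F : ℝ → ℝ} (hF : Continuous F) {y : ℝ} (hy : y ≠ 0)
    (b x : ℝ) :
    HasDerivAt (fun x => ∫ t in (0:ℝ)..1, F (b * x + y * t))
      (b / y * (F (b * x + y) - F (b * x))) x := by
  have hprim : ∀ u, HasDerivAt (fun u => ∫ s in (0:ℝ)..u, F s) (F u) u := fun u =>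
    (hF.integral_hasStrictDerivAt 0 u).hasDerivAt
  have hrepr : (fun x => ∫ t in (0:ℝ)..1, F (b * x + y * t)) =
      fun x => y⁻¹ * ((∫ s in (0:ℝ)..b * x + y, F s) - ∫ s in (0:ℝ)..b * x, F s) := by
    funext x
    simp_rw [add_comm (b * x), intervalIntegral.integral_comp_mul_add F hy,
      intervalIntegral.integral_interval_sub_left (hF.intervalIntegrable _ _)
        (hF.intervalIntegrable _ _)]
    simp
  have hlin : ∀ d, HasDerivAt (fun x => b * x + d) b x := fun d => by
    simpa using ((hasDerivAt_id x).const_mul b).add_const d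
  have hdiff := ((hprim _).comp x (hlin y)).sub ((hprim _).comp x (hlin 0))
  simp only [add_zero, Function.comp_def] at hdiff
  rw [hrepr]
  exact (hdiff.const_mul y⁻¹).congr_deriv (by ring)

section OneSided

noncomputable def oneSidedOp (y ε : ℝ) (ρ : ℝ → ℝ) (x : ℝ) : ℝ :=
  ∫ t in (0:ℝ)..1, (ρ ((1 - y) * x + y * t) + ε * omegaMod ρ ((1 - y) * x + y * t) y)

variable {ρ : ℝ → ℝ} {y ε : ℝ}

lemma Gop_eq_oneSidedOp : Gop y ρ = oneSidedOp y (-1) ρ := by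
  funext x
  simp only [Gop, oneSidedOp, neg_one_mul, sub_eq_add_neg]

lemma Hop_eq_oneSidedOp : Hop y ρ = oneSidedOp y 1 ρ := by
  funext x
  simp only [Hop, oneSidedOp, one_mul]

lemma oneSidedOp_eqOn (hy : y ∈ Icc (0:ℝ) 1) :
    EqOn (oneSidedOp y ε ρ) (fun x => ∫ t in (0:ℝ)..1,
      (extendUnit ρ ((1 - y) * x + y * t) +
        ε * windowOsc (extendUnit ρ) y ((1 - y) * x + y * t))) (Icc 0 1) := by
  intro x hx
  refine intervalIntegral.integral_congr fun t ht => ?_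
  rw [uIcc_of_le zero_le_one] at ht
  have hs : (1 - y) * x + y * t ∈ Icc (0:ℝ) 1 :=
    convex_Icc (0:ℝ) 1 hx ht (by linarith [hy.2]) hy.1 (by ring)
  simp only [extendUnit_of_mem ρ hs, omegaMod_eq_windowOsc ρ hs]

lemma hasDerivAt_oneSidedOp (hρ : ContinuousOn ρ (Icc (0:ℝ) 1)) (hy : y ∈ Ioo (0:ℝ) 1)
    {x : ℝ} (hx : x ∈ Ioo (0:ℝ) 1) :
    HasDerivAt (oneSidedOp y ε ρ) ((1 - y) / y *
      ((extendUnit ρ ((1 - y) * x + y) + ε * windowOsc (extendUnit ρ) y ((1 - y) * x + y)) -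
        (extendUnit ρ ((1 - y) * x) + ε * windowOsc (extendUnit ρ) y ((1 - y) * x)))) x := by
  have hρ' := continuous_extendUnit hρ
  refine (hasDerivAt_integral_comp_affine
    (F := fun s => extendUnit ρ s + ε * windowOsc (extendUnit ρ) y s)
    (hρ'.add (continuous_const.mul (continuous_windowOsc hρ' y))) hy.1.ne' (1 - y) x
    ).congr_of_eventuallyEq ?_
  exact (oneSidedOp_eqOn (Ioo_subset_Icc_self hy)).eventuallyEq_of_mem
    (Icc_mem_nhds hx.1 hx.2)

lemma abs_deriv_oneSidedOp_le (hρ : ContinuousOn ρ (Icc (0:ℝ) 1)) (hy : y ∈ Ioo (0:ℝ) 1)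
    (hε : |ε| ≤ 1) {x : ℝ} (hx : x ∈ Ioo (0:ℝ) 1) :
    |deriv (oneSidedOp y ε ρ) x| ≤ (1 - y) / y *
      (2 * windowOsc (extendUnit ρ) y ((1 - y) * x) +
        windowOsc (extendUnit ρ) y ((1 - y) * x + y)) := by
  have hc : 0 ≤ (1 - y) / y := div_nonneg (by linarith [hy.2]) hy.1.le
  rw [(hasDerivAt_oneSidedOp hρ hy hx).deriv, abs_mul, abs_of_nonneg hc]
  gcongr
  exact abs_add_mul_windowOsc_sub_le (continuous_extendUnit hρ) hy.1.le hε _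

lemma tau_eq_lpNorm_windowOsc (p : ℝ) (ρ : ℝ → ℝ) (δ : ℝ) :
    tau p ρ δ = lpNorm p (windowOsc (extendUnit ρ) δ) := by
  rw [tau, _root_.lpNorm, _root_.lpNorm, intervalIntegral.integral_congr fun x hx => ?_]
  rw [uIcc_of_le zero_le_one] at hx
  simp only [omegaMod_eq_windowOsc ρ hx]

lemma lpNorm_deriv_oneSidedOp_le {p : ℝ} (hp : 1 ≤ p) (hρ : ContinuousOn ρ (Icc (0:ℝ) 1))
    (hy : y ∈ Ioo (0:ℝ) 1) (hε : |ε| ≤ 1) :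
    lpNorm p (deriv (oneSidedOp y ε ρ)) ≤ 3 / y * tau p ρ y := by
  obtain ⟨hy0, hy1⟩ := hy
  have hp0 : 0 < p := by linarith
  set w := windowOsc (extendUnit ρ) y
  have hw : Continuous w := continuous_windowOsc (continuous_extendUnit hρ) y
  have hleft : lpNorm p (fun x => w ((1 - y) * x)) ≤ (1 - y)⁻¹ ^ (1 / p) * lpNorm p w := by
    simpa using lpNorm_comp_affine_le hp0 hw (c := 1 - y) (d := 0) (by linarith) le_rfl
      (by linarith)
  have hright : lpNorm p (fun x => w ((1 - y) * x + y)) ≤ (1 - y)⁻¹ ^ (1 / p) * lpNorm p w :=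
    lpNorm_comp_affine_le hp0 hw (by linarith) hy0.le (by linarith)
  have hK : (1 - y) * (1 - y)⁻¹ ^ (1 / p) ≤ 1 := by
    calc (1 - y) * (1 - y)⁻¹ ^ (1 / p) ≤ (1 - y) * (1 - y)⁻¹ ^ (1 : ℝ) := by
          refine mul_le_mul_of_nonneg_left (rpow_le_rpow_of_exponent_le ?_
            (div_le_one_of_le₀ hp hp0.le)) (by linarith)
          exact (one_le_inv₀ (by linarith : (0:ℝ) < 1 - y)).2 (by linarith)
      _ = 1 := by rw [rpow_one, mul_inv_cancel₀ (by linarith)]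
  calc lpNorm p (deriv (oneSidedOp y ε ρ))
      ≤ lpNorm p (fun x => (1 - y) / y * (2 * w ((1 - y) * x) + w ((1 - y) * x + y))) :=
        lpNorm_le_of_abs_le hp0 (measurable_deriv _) (by fun_prop)
          fun x hx => abs_deriv_oneSidedOp_le hρ ⟨hy0, hy1⟩ hε hx
    _ = (1 - y) / y *
          lpNorm p ((fun x => 2 * w ((1 - y) * x)) + fun x => w ((1 - y) * x + y)) := by
        rw [lpNorm_const_mul hp0, abs_of_nonneg (div_nonneg (by linarith) hy0.le)]
        rfl
    _ ≤ (1 - y) / y * (2 * lpNorm p (fun x => w ((1 - y) * x)) +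
          lpNorm p (fun x => w ((1 - y) * x + y))) := by
        gcongr
        refine (lpNorm_add_le hp (by fun_prop) (by fun_prop)).trans_eq ?_
        rw [lpNorm_const_mul hp0, abs_two]
    _ ≤ (1 - y) / y * (3 * ((1 - y)⁻¹ ^ (1 / p) * lpNorm p w)) := by
        gcongr
        linarith
    _ = 3 / y * ((1 - y) * (1 - y)⁻¹ ^ (1 / p)) * lpNorm p w := by ring
    _ ≤ 3 / y * 1 * lpNorm p w := by gcongr; exact lpNorm_nonneg p w
    _ = 3 / y * tau p ρ y := by rw [mul_one, tau_eq_lpNorm_windowOsc]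

end OneSided

/-- Lemma 3.1, second part. -/
theorem stmt1 (p : ℝ) (hp : 1 ≤ p) (ρ : ℝ → ℝ)
    (hρ : ContinuousOn ρ (Icc (0:ℝ) 1)) (y : ℝ) (hy : y ∈ Ioo (0:ℝ) 1) :
    (∀ x ∈ Ioo (0:ℝ) 1, DifferentiableAt ℝ (Gop y ρ) x) ∧
    (∀ x ∈ Ioo (0:ℝ) 1, DifferentiableAt ℝ (Hop y ρ) x) ∧
    max (lpNorm p (deriv (Gop y ρ))) (lpNorm p (deriv (Hop y ρ))) ≤
      (3 / y) * tau p ρ y := by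
  rw [Gop_eq_oneSidedOp, Hop_eq_oneSidedOp]
  exact ⟨fun x hx => (hasDerivAt_oneSidedOp hρ hy hx).differentiableAt,
    fun x hx => (hasDerivAt_oneSidedOp hρ hy hx).differentiableAt,
    max_le (lpNorm_deriv_oneSidedOp_le hp hρ hy (by norm_num))
      (lpNorm_deriv_oneSidedOp_le hp hρ hy (by norm_num))⟩
end

section
/- Let k ∈ ℕ, k ≥ 2. Suppose P_k and q_k are algebraic polynomials of degree at most k with P_k(u) ≤ Φ(u) ≤ q_k(u) for all u ∈ [−1, 1], and suppose ρ : [0,1] → ℝ has the form ρ(x) = ρ(0) + ∫₀ˣ g(t) dt with g integrable. Then for every x ∈ [0,1], |ρ(x) − M_k(ρ, x)| ≤ ∫₀¹ (q_k − P_k)(x − t) |g(t)| dt and |ρ(x) − N_k(ρ, x)| ≤ ∫₀¹ (q_k − P_k)(x − t) |g(t)| dt. (Pointwise estimate from the proof of Lemma 3.4.) -/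
/-!
Since `Φ(x - t)` is the indicator of `t < x`, we have `ρ(x) = ρ(0) + ∫₀¹ Φ(x - t) g(t) dt`.
Splitting `g = g₊ - g₋` and using `P ≤ Φ ≤ Q`, the integrand of `ρ(x) - M_k(ρ, x)` is
`(Φ - P)(x - t) g₊(t) + (Q - Φ)(x - t) g₋(t)`, which lies between `0` and `(Q - P)(x - t) |g(t)|`;
replacing `g` by `-g` turns `N_k` into `M_k`.
-/

open MeasureTheory Set Real

theorem abs_mul_sub_posPart_sub_negPart_le {p s q : ℝ} (hps : p ≤ s) (hsq : s ≤ q) (y : ℝ) :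
    |s * y - (p * max y 0 - q * max (-y) 0)| ≤ (q - p) * |y| := by
  rcases le_total 0 y with hy | hy
  · rw [max_eq_left hy, max_eq_right (neg_nonpos.mpr hy), abs_of_nonneg hy,
      abs_of_nonneg (by nlinarith)]
    nlinarith
  · rw [max_eq_right hy, max_eq_left (neg_nonneg.mpr hy), abs_of_nonpos hy,
      abs_of_nonneg (by nlinarith)]
    nlinarith

theorem IntervalIntegrable.pos_part {g : ℝ → ℝ} {μ : Measure ℝ} {a b : ℝ}
    (hg : IntervalIntegrable g μ a b) : IntervalIntegrable (fun t => max (g t) 0) μ a b :=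
  ⟨hg.1.pos_part, hg.2.pos_part⟩

theorem IntervalIntegrable.neg_part {g : ℝ → ℝ} {μ : Measure ℝ} {a b : ℝ}
    (hg : IntervalIntegrable g μ a b) : IntervalIntegrable (fun t => max (-g t) 0) μ a b :=
  ⟨hg.1.neg_part, hg.2.neg_part⟩

section OneSidedApproximation

variable {a b : ℝ} {p q s g : ℝ → ℝ}

theorem abs_integral_mul_sub_posPart_sub_negPart_le (hab : a ≤ b)
    (hp : ContinuousOn p (uIcc a b)) (hq : ContinuousOn q (uIcc a b))
    (hg : IntervalIntegrable g volume a b)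
    (hsg : IntervalIntegrable (fun t => s t * g t) volume a b)
    (hs : ∀ t ∈ Icc a b, p t ≤ s t ∧ s t ≤ q t) :
    |(∫ t in a..b, s t * g t) -
        ((∫ t in a..b, p t * max (g t) 0) - ∫ t in a..b, q t * max (-g t) 0)| ≤
      ∫ t in a..b, (q t - p t) * |g t| := by
  have hpg : IntervalIntegrable (fun t => p t * max (g t) 0) volume a b :=
    hg.pos_part.continuousOn_mul hp
  have hqg : IntervalIntegrable (fun t => q t * max (-g t) 0) volume a b :=
    hg.neg_part.continuousOn_mul hq
  rw [← intervalIntegral.integral_sub hpg hqg, ← intervalIntegral.integral_sub hsg (hpg.sub hqg)]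
  calc _ ≤ ∫ t in a..b, |s t * g t - (p t * max (g t) 0 - q t * max (-g t) 0)| :=
        intervalIntegral.abs_integral_le_integral_abs hab
    _ ≤ ∫ t in a..b, (q t - p t) * |g t| :=
        intervalIntegral.integral_mono_on hab (hsg.sub (hpg.sub hqg)).abs
          (hg.abs.continuousOn_mul (hq.sub hp))
          fun t ht => abs_mul_sub_posPart_sub_negPart_le (hs t ht).1 (hs t ht).2 (g t)

theorem abs_integral_mul_sub_negPart_sub_posPart_le (hab : a ≤ b)
    (hp : ContinuousOn p (uIcc a b)) (hq : ContinuousOn q (uIcc a b))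
    (hg : IntervalIntegrable g volume a b)
    (hsg : IntervalIntegrable (fun t => s t * g t) volume a b)
    (hs : ∀ t ∈ Icc a b, p t ≤ s t ∧ s t ≤ q t) :
    |(∫ t in a..b, s t * g t) -
        ((∫ t in a..b, q t * max (g t) 0) - ∫ t in a..b, p t * max (-g t) 0)| ≤
      ∫ t in a..b, (q t - p t) * |g t| := by
  have h := abs_integral_mul_sub_posPart_sub_negPart_le hab hp hq hg.neg
    (by simpa only [Pi.neg_def, mul_neg] using hsg.neg) hs
  simp only [Pi.neg_apply, mul_neg, neg_neg, abs_neg, intervalIntegral.integral_neg] at h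
  rw [← abs_neg]
  convert h using 2
  ring

end OneSidedApproximation

theorem stepPhi_sub_mul_eq_indicator (x : ℝ) (g : ℝ → ℝ) :
    (fun t => stepPhi (x - t) * g t) = (Iio x).indicator g := by
  funext t
  by_cases ht : t < x <;> simp [stepPhi, indicator, sub_pos, ht]

theorem IntervalIntegrable.stepPhi_sub_mul {g : ℝ → ℝ} {μ : Measure ℝ} {a b : ℝ}
    (hg : IntervalIntegrable g μ a b) (x : ℝ) :
    IntervalIntegrable (fun t => stepPhi (x - t) * g t) μ a b := by
  rw [stepPhi_sub_mul_eq_indicator]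
  exact ⟨hg.1.indicator measurableSet_Iio, hg.2.indicator measurableSet_Iio⟩

theorem integral_stepPhi_sub_mul {g : ℝ → ℝ} {a b x : ℝ} (hx : x ∈ Icc a b) :
    ∫ t in a..b, stepPhi (x - t) * g t = ∫ t in a..x, g t := by
  rw [stepPhi_sub_mul_eq_indicator, ← intervalIntegral.integral_indicator hx]
  refine intervalIntegral.integral_congr_ae ?_
  filter_upwards [indicator_ae_eq_of_ae_eq_set (f := g) (Iio_ae_eq_Iic (μ := volume))]
    with t ht _ using ht

theorem stmt4_general (P Q : Polynomial ℝ)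
    (hPQ : ∀ u ∈ Icc (-1:ℝ) 1, P.eval u ≤ stepPhi u ∧ stepPhi u ≤ Q.eval u)
    (ρ g : ℝ → ℝ) (hg : IntervalIntegrable g volume 0 1)
    (hρ : ∀ x ∈ Icc (0:ℝ) 1, ρ x = ρ 0 + ∫ t in (0:ℝ)..x, g t) :
    ∀ x ∈ Icc (0:ℝ) 1,
      |ρ x - Mop P Q (ρ 0) g x| ≤
        (∫ t in (0:ℝ)..1, (Q.eval (x - t) - P.eval (x - t)) * |g t|) ∧
      |ρ x - Nop P Q (ρ 0) g x| ≤
        ∫ t in (0:ℝ)..1, (Q.eval (x - t) - P.eval (x - t)) * |g t| := by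
  intro x hx
  have hρx : ρ x = ρ 0 + ∫ t in (0:ℝ)..1, stepPhi (x - t) * g t := by
    rw [hρ x hx, integral_stepPhi_sub_mul hx]
  have hcont (R : Polynomial ℝ) : ContinuousOn (fun t => R.eval (x - t)) (uIcc 0 1) :=
    (R.continuous.comp (continuous_const.sub continuous_id)).continuousOn
  have hs : ∀ t ∈ Icc (0:ℝ) 1,
      P.eval (x - t) ≤ stepPhi (x - t) ∧ stepPhi (x - t) ≤ Q.eval (x - t) :=
    fun t ht => hPQ (x - t) ⟨by linarith [hx.1, ht.2], by linarith [hx.2, ht.1]⟩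
  rw [hρx, Mop, Nop]
  constructor
  · convert abs_integral_mul_sub_posPart_sub_negPart_le zero_le_one (hcont P) (hcont Q) hg
      (hg.stepPhi_sub_mul x) hs using 2
    ring
  · convert abs_integral_mul_sub_negPart_sub_posPart_le zero_le_one (hcont P) (hcont Q) hg
      (hg.stepPhi_sub_mul x) hs using 2
    ring

/-- Pointwise estimate from the proof of Lemma 3.4. -/
theorem stmt4 (k : ℕ) (hk : 2 ≤ k) (P Q : Polynomial ℝ)
    (hPdeg : P.natDegree ≤ k) (hQdeg : Q.natDegree ≤ k)
    (hPQ : ∀ u ∈ Icc (-1:ℝ) 1, P.eval u ≤ stepPhi u ∧ stepPhi u ≤ Q.eval u)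
    (ρ g : ℝ → ℝ) (hg : IntervalIntegrable g volume 0 1)
    (hρ : ∀ x ∈ Icc (0:ℝ) 1, ρ x = ρ 0 + ∫ t in (0:ℝ)..x, g t) :
    ∀ x ∈ Icc (0:ℝ) 1,
      |ρ x - Mop P Q (ρ 0) g x| ≤
        (∫ t in (0:ℝ)..1, (Q.eval (x - t) - P.eval (x - t)) * |g t|) ∧
      |ρ x - Nop P Q (ρ 0) g x| ≤
        ∫ t in (0:ℝ)..1, (Q.eval (x - t) - P.eval (x - t)) * |g t| :=
  stmt4_general P Q hPQ ρ g hg hρ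
end

section
/- Let 1 ≤ p < ∞ and k ∈ ℕ, k ≥ 2. Suppose P_k and q_k are algebraic polynomials of degree at most k with P_k(u) ≤ Φ(u) ≤ q_k(u) for all u ∈ [−1, 1], and suppose ρ : [0,1] → ℝ has the form ρ(x) = ρ(0) + ∫₀ˣ g(t) dt with g ∈ L^p[0,1]. Set C_k = ∫_{−1}^{1} (q_k(u) − P_k(u)) du. Then max{‖ρ − M_k(ρ)‖_p, ‖ρ − N_k(ρ)‖_p} ≤ C_k ‖g‖_p. (Lemma 3.4.) -/
open MeasureTheory Set Real

instance : IsFiniteMeasure (volume.restrict (Icc (0:ℝ) 1)) := by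
  constructor
  rw [Measure.restrict_apply_univ]
  simp [Real.volume_Icc]

lemma intInt_eq (f : ℝ → ℝ) : ∫ t in (0:ℝ)..1, f t = ∫ t in Icc (0:ℝ) 1, f t := by
  rw [intervalIntegral.integral_of_le zero_le_one, MeasureTheory.integral_Icc_eq_integral_Ioc]

lemma shift_le {Keval : ℝ → ℝ} (hKc : Continuous Keval)
    (hKnn : ∀ u ∈ Icc (-1:ℝ) 1, 0 ≤ Keval u) {a b : ℝ}
    (ha : -1 ≤ a) (hb : b ≤ 1) (hab : a ≤ b) :
    ∫ u in a..b, Keval u ≤ ∫ u in (-1:ℝ)..1, Keval u := by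
  have i1 : ∀ c d : ℝ, IntervalIntegrable Keval volume c d := fun c d =>
    hKc.intervalIntegrable c d
  have e1 : ∫ u in (-1:ℝ)..1, Keval u =
      (∫ u in (-1:ℝ)..a, Keval u) + ((∫ u in a..b, Keval u) + ∫ u in b..1, Keval u) := by
    rw [intervalIntegral.integral_add_adjacent_intervals (i1 a b) (i1 b 1),
      intervalIntegral.integral_add_adjacent_intervals (i1 (-1) a) (i1 a 1)]
  have n1 : 0 ≤ ∫ u in (-1:ℝ)..a, Keval u := by
    apply intervalIntegral.integral_nonneg ha
    intro u hu; exact hKnn u ⟨hu.1, le_trans hu.2 (le_trans hab hb)⟩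
  have n2 : 0 ≤ ∫ u in b..1, Keval u := by
    apply intervalIntegral.integral_nonneg hb
    intro u hu; exact hKnn u ⟨le_trans (le_trans ha hab) hu.1, hu.2⟩
  linarith

lemma step_repr {g : ℝ → ℝ} {x : ℝ} (hx : x ∈ Icc (0:ℝ) 1) :
    ∫ t in Icc (0:ℝ) 1, stepPhi (x - t) * g t = ∫ t in (0:ℝ)..x, g t := by
  have h1 : (fun t => stepPhi (x - t) * g t) = (Iio x).indicator g := by
    funext t
    by_cases h : t < x
    · simp [stepPhi, Set.indicator, h, sub_pos.mpr h]
    · have : ¬ (0 < x - t) := by intro hh; exact h (by linarith)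
      simp [stepPhi, Set.indicator, h, this]
  rw [h1, MeasureTheory.setIntegral_indicator measurableSet_Iio]
  have h2 : Icc (0:ℝ) 1 ∩ Iio x = Ico 0 x := by
    ext t
    constructor
    · rintro ⟨⟨h1', _⟩, h2'⟩; exact ⟨h1', h2'⟩
    · rintro ⟨h1', h2'⟩; exact ⟨⟨h1', by linarith [hx.2]⟩, h2'⟩
  rw [h2, intervalIntegral.integral_of_le hx.1,
    MeasureTheory.setIntegral_congr_set (MeasureTheory.Ico_ae_eq_Ioc)]

lemma hoelder_step {p : ℝ} (hp : 1 ≤ p) {μ : Measure ℝ} [IsFiniteMeasure μ] {K w : ℝ → ℝ}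
    (hKm : AEStronglyMeasurable K μ) {C0 : ℝ} (hKb : ∀ᵐ t ∂μ, 0 ≤ K t ∧ K t ≤ C0)
    (hw : MemLp w (ENNReal.ofReal p) μ) (hwnn : ∀ t, 0 ≤ w t) :
    ∫ t, K t * w t ∂μ ≤ (∫ t, K t ∂μ) ^ (1 - 1/p) * (∫ t, K t * w t ^ p ∂μ) ^ (1/p) := by
  rcases eq_or_lt_of_le hp with h1 | h1
  · rw [← h1]
    simp [Real.rpow_one]
  have hq : Real.HolderConjugate (p/(p-1)) p :=
    ((Real.holderConjugate_iff_eq_conjExponent h1).mpr rfl).symm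
  set q := p / (p - 1) with hqdef
  have hq0 : 0 < q := hq.pos
  have hp0 : 0 < p := by linarith
  have hsum : q⁻¹ + p⁻¹ = 1 := hq.inv_add_inv_eq_one
  have hq1 : 1 / q = 1 - 1 / p := by rw [one_div, one_div]; linarith
  set C1 := max C0 0 with hC1def
  have hC1 : 0 ≤ C1 := le_max_right _ _
  set a := fun t => K t ^ (1/q) with hadef
  set b := fun t => K t ^ (1/p) * w t with hbdef
  have ham : AEStronglyMeasurable a μ :=
    (Real.continuous_rpow_const (by positivity)).comp_aestronglyMeasurable hKm
  have hbm : AEStronglyMeasurable b μ :=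
    ((Real.continuous_rpow_const (by positivity)).comp_aestronglyMeasurable hKm).mul hw.1
  have hMa : MemLp a (ENNReal.ofReal q) μ := by
    apply MemLp.of_bound ham (C1 ^ (1/q))
    filter_upwards [hKb] with t ht
    rw [Real.norm_eq_abs, abs_of_nonneg (Real.rpow_nonneg ht.1 _)]
    exact Real.rpow_le_rpow ht.1 (le_trans ht.2 (le_max_left _ _)) (by positivity)
  have hMb : MemLp b (ENNReal.ofReal p) μ := by
    apply MemLp.of_le_mul hw hbm (c := C1 ^ (1/p))
    filter_upwards [hKb] with t ht
    rw [Real.norm_eq_abs, abs_mul, abs_of_nonneg (Real.rpow_nonneg ht.1 _)]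
    exact mul_le_mul_of_nonneg_right
      (Real.rpow_le_rpow ht.1 (le_trans ht.2 (le_max_left _ _)) (by positivity)) (abs_nonneg _)
  have hann : 0 ≤ᵐ[μ] a := by
    filter_upwards [hKb] with t ht; exact Real.rpow_nonneg ht.1 _
  have hbnn : 0 ≤ᵐ[μ] b := by
    filter_upwards [hKb] with t ht; exact mul_nonneg (Real.rpow_nonneg ht.1 _) (hwnn t)
  have key := MeasureTheory.integral_mul_le_Lp_mul_Lq_of_nonneg hq hann hbnn hMa hMb
  have e1 : ∫ t, a t * b t ∂μ = ∫ t, K t * w t ∂μ := by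
    apply integral_congr_ae
    filter_upwards [hKb] with t ht
    show K t ^ (1/q) * (K t ^ (1/p) * w t) = K t * w t
    rw [← mul_assoc, ← Real.rpow_add_of_nonneg ht.1 (by positivity) (by positivity)]
    rw [one_div, one_div, hsum, Real.rpow_one]
  have e2 : ∫ t, a t ^ q ∂μ = ∫ t, K t ∂μ := by
    apply integral_congr_ae
    filter_upwards [hKb] with t ht
    show (K t ^ (1/q)) ^ q = K t
    rw [← Real.rpow_mul ht.1, one_div_mul_cancel hq0.ne', Real.rpow_one]
  have e3 : ∫ t, b t ^ p ∂μ = ∫ t, K t * w t ^ p ∂μ := by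
    apply integral_congr_ae
    filter_upwards [hKb] with t ht
    show (K t ^ (1/p) * w t) ^ p = K t * w t ^ p
    rw [Real.mul_rpow (Real.rpow_nonneg ht.1 _) (hwnn t), ← Real.rpow_mul ht.1,
      one_div_mul_cancel hp0.ne', Real.rpow_one]
  rw [e1, e2, e3, hq1] at key
  exact key

lemma core {p : ℝ} (hp : 1 ≤ p) {Keval g f : ℝ → ℝ} (hKc : Continuous Keval)
    (hKnn : ∀ u ∈ Icc (-1:ℝ) 1, 0 ≤ Keval u)
    (hg : MemLp g (ENNReal.ofReal p) (volume.restrict (Icc (0:ℝ) 1)))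
    (hbound : ∀ x ∈ Icc (0:ℝ) 1, |f x| ≤ ∫ t in Icc (0:ℝ) 1, Keval (x - t) * |g t|) :
    lpNorm p f ≤ (∫ u in (-1:ℝ)..1, Keval u) * lpNorm p g := by
  set ν := volume.restrict (Icc (0:ℝ) 1) with hνdef
  set C := ∫ u in (-1:ℝ)..1, Keval u with hCdef
  have hp0 : 0 < p := by linarith
  have hC : 0 ≤ C := by
    apply intervalIntegral.integral_nonneg (by norm_num)
    exact hKnn
  -- bound for Keval on [-1,1]
  obtain ⟨C1, hC1⟩ := isCompact_Icc.exists_bound_of_continuousOn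
    (s := Icc (-1:ℝ) 1) hKc.continuousOn
  have hC1nn : 0 ≤ C1 := le_trans (norm_nonneg _) (hC1 0 (by norm_num))
  have hmem : ∀ x ∈ Icc (0:ℝ) 1, ∀ t ∈ Icc (0:ℝ) 1, x - t ∈ Icc (-1:ℝ) 1 := by
    intro x hx t ht
    exact ⟨by linarith [hx.1, ht.2], by linarith [hx.2, ht.1]⟩
  have hKb_ae : ∀ x ∈ Icc (0:ℝ) 1, ∀ᵐ t ∂ν, 0 ≤ Keval (x - t) ∧ Keval (x - t) ≤ C1 := by
    intro x hx
    filter_upwards [ae_restrict_mem measurableSet_Icc] with t ht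
    have hu := hmem x hx t ht
    exact ⟨hKnn _ hu, le_trans (le_abs_self _) (hC1 _ hu)⟩
  -- |g|^p integrable
  have hwp : Integrable (fun t => |g t| ^ p) ν := by
    have h1 := hg.integrable_norm_rpow (by simp [ENNReal.ofReal_eq_zero]; linarith)
      ENNReal.ofReal_ne_top
    simpa [ENNReal.toReal_ofReal hp0.le, Real.norm_eq_abs] using h1
  have hw : MemLp (fun t => |g t|) (ENNReal.ofReal p) ν := by
    simpa [Real.norm_eq_abs] using hg.norm
  set A := ∫ t, |g t| ^ p ∂ν with hAdef
  have hA : 0 ≤ A := integral_nonneg fun t => Real.rpow_nonneg (abs_nonneg _) _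
  -- product integrability
  have h1c : Continuous fun z : ℝ × ℝ => Keval (z.1 - z.2) :=
    hKc.comp (continuous_fst.sub continuous_snd)
  have hFm : AEStronglyMeasurable (fun z : ℝ × ℝ => Keval (z.1 - z.2) * |g z.2| ^ p)
      (ν.prod ν) := h1c.aestronglyMeasurable.mul hwp.1.comp_snd
  have hFi : Integrable (fun z : ℝ × ℝ => Keval (z.1 - z.2) * |g z.2| ^ p) (ν.prod ν) := by
    rw [MeasureTheory.integrable_prod_iff hFm]
    constructor
    · filter_upwards [ae_restrict_mem measurableSet_Icc] with x hx
      apply hwp.bdd_mul (c := C1)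
        ((hKc.comp (continuous_const.sub continuous_id)).aestronglyMeasurable)
      filter_upwards [hKb_ae x hx] with t ht
      show ‖Keval (x - t)‖ ≤ C1
      rw [Real.norm_eq_abs, abs_of_nonneg ht.1]; exact ht.2
    · apply Integrable.mono' (integrable_const (C1 * A))
        (hFm.norm.integral_prod_right')
      filter_upwards [ae_restrict_mem measurableSet_Icc] with x hx
      have hnn : 0 ≤ ∫ t, ‖Keval (x - t) * |g t| ^ p‖ ∂ν :=
        integral_nonneg fun t => norm_nonneg _
      rw [Real.norm_eq_abs, abs_of_nonneg hnn]
      have : ∫ t, ‖Keval (x - t) * |g t| ^ p‖ ∂ν ≤ ∫ t, C1 * |g t| ^ p ∂ν := by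
        apply integral_mono_of_nonneg (Filter.Eventually.of_forall fun t => norm_nonneg _)
          (hwp.const_mul C1)
        filter_upwards [hKb_ae x hx] with t ht
        rw [Real.norm_eq_abs, abs_mul, abs_of_nonneg ht.1,
          abs_of_nonneg (Real.rpow_nonneg (abs_nonneg _) _)]
        exact mul_le_mul_of_nonneg_right ht.2 (Real.rpow_nonneg (abs_nonneg _) _)
      calc ∫ t, ‖Keval (x - t) * |g t| ^ p‖ ∂ν ≤ ∫ t, C1 * |g t| ^ p ∂ν := this
        _ = C1 * A := by rw [integral_const_mul]
  set Wp := fun x => ∫ t, Keval (x - t) * |g t| ^ p ∂ν with hWpdef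
  have hWp_int : Integrable Wp ν := hFi.integral_prod_left
  have hWp_nn : ∀ x ∈ Icc (0:ℝ) 1, 0 ≤ Wp x := by
    intro x hx
    apply integral_nonneg_of_ae
    filter_upwards [hKb_ae x hx] with t ht
    exact mul_nonneg ht.1 (Real.rpow_nonneg (abs_nonneg _) _)
  -- pointwise: |f x|^p ≤ C^(p-1) * Wp x
  have step1 : ∀ x ∈ Icc (0:ℝ) 1, |f x| ^ p ≤ C ^ (p - 1) * Wp x := by
    intro x hx
    have hb := hbound x hx
    have hh := hoelder_step hp (μ := ν) (K := fun t => Keval (x - t)) (w := fun t => |g t|)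
      ((hKc.comp (continuous_const.sub continuous_id)).aestronglyMeasurable)
      (hKb_ae x hx) hw (fun t => abs_nonneg _)
    have h2nn : 0 ≤ ∫ t, Keval (x - t) ∂ν := by
      apply integral_nonneg_of_ae
      filter_upwards [hKb_ae x hx] with t ht using ht.1
    have h2 : ∫ t, Keval (x - t) ∂ν ≤ C := by
      have e : ∫ t, Keval (x - t) ∂ν = ∫ u in (x-1)..x, Keval u := by
        rw [← intInt_eq fun t => Keval (x - t), intervalIntegral.integral_comp_sub_left,
          sub_zero]
      rw [e]
      exact shift_le hKc hKnn (by linarith [hx.1]) hx.2 (by linarith)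
    have h3 : (∫ t, Keval (x - t) ∂ν) ^ (1 - 1/p) ≤ C ^ (1 - 1/p) := by
      apply Real.rpow_le_rpow h2nn h2
      have : 1/p ≤ 1 := by
        rw [div_le_one hp0]; exact hp
      linarith
    have hWnn := hWp_nn x hx
    have h4 : |f x| ≤ C ^ (1 - 1/p) * Wp x ^ (1/p) := by
      calc |f x| ≤ (∫ t, Keval (x - t) ∂ν) ^ (1 - 1/p) * Wp x ^ (1/p) := by
            exact le_trans hb hh
        _ ≤ C ^ (1 - 1/p) * Wp x ^ (1/p) :=
            mul_le_mul_of_nonneg_right h3 (Real.rpow_nonneg hWnn _)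
    calc |f x| ^ p ≤ (C ^ (1 - 1/p) * Wp x ^ (1/p)) ^ p :=
          Real.rpow_le_rpow (abs_nonneg _) h4 hp0.le
      _ = C ^ (p - 1) * Wp x := by
          rw [Real.mul_rpow (Real.rpow_nonneg hC _) (Real.rpow_nonneg hWnn _),
            ← Real.rpow_mul hC, ← Real.rpow_mul hWnn, one_div_mul_cancel hp0.ne',
            Real.rpow_one]
          congr 2
          field_simp
  -- integrate
  have step2 : ∫ x, |f x| ^ p ∂ν ≤ C ^ (p - 1) * ∫ x, Wp x ∂ν := by
    rw [← integral_const_mul]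
    apply integral_mono_of_nonneg
      (Filter.Eventually.of_forall fun x => Real.rpow_nonneg (abs_nonneg _) _)
      (hWp_int.const_mul _)
    filter_upwards [ae_restrict_mem measurableSet_Icc] with x hx using step1 x hx
  -- Fubini
  have hswap : ∫ x, Wp x ∂ν = ∫ t, (∫ x, Keval (x - t) ∂ν) * |g t| ^ p ∂ν := by
    have h := MeasureTheory.integral_integral_swap
      (f := fun x t => Keval (x - t) * |g t| ^ p) (μ := ν) (ν := ν) hFi
    rw [hWpdef]
    rw [h]
    congr 1
    funext t
    rw [integral_mul_const]
  have step3 : ∫ x, Wp x ∂ν ≤ C * A := by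
    rw [hswap]
    have hCA : ∫ t, C * |g t| ^ p ∂ν = C * A := by rw [integral_const_mul]
    rw [← hCA]
    apply integral_mono_of_nonneg ?_ (hwp.const_mul C)
    · filter_upwards [ae_restrict_mem measurableSet_Icc] with t ht
      have hshift : ∫ x, Keval (x - t) ∂ν ≤ C := by
        have e : ∫ x, Keval (x - t) ∂ν = ∫ u in (0-t)..(1-t), Keval u := by
          rw [← intInt_eq fun x => Keval (x - t), intervalIntegral.integral_comp_sub_right]
        rw [e]
        exact shift_le hKc hKnn (by simp; linarith [ht.2]) (by linarith [ht.1]) (by linarith)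
      exact mul_le_mul_of_nonneg_right hshift (Real.rpow_nonneg (abs_nonneg _) _)
    · filter_upwards [ae_restrict_mem measurableSet_Icc] with t ht
      apply mul_nonneg ?_ (Real.rpow_nonneg (abs_nonneg _) _)
      apply integral_nonneg_of_ae
      filter_upwards [ae_restrict_mem measurableSet_Icc] with x hx
      exact hKnn _ (hmem x hx t ht)
  have main : ∫ x, |f x| ^ p ∂ν ≤ C ^ p * A := by
    have : C ^ (p - 1) * (C * A) = C ^ p * A := by
      rw [← mul_assoc]
      congr 1
      calc C ^ (p - 1) * C = C ^ (p - 1) * C ^ (1:ℝ) := by rw [Real.rpow_one]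
        _ = C ^ (p - 1 + 1) := (Real.rpow_add_of_nonneg hC (by linarith) zero_le_one).symm
        _ = C ^ p := by norm_num
    calc ∫ x, |f x| ^ p ∂ν ≤ C ^ (p - 1) * ∫ x, Wp x ∂ν := step2
      _ ≤ C ^ (p - 1) * (C * A) :=
          mul_le_mul_of_nonneg_left step3 (Real.rpow_nonneg hC _)
      _ = C ^ p * A := this
  -- conclude
  have hgnorm : lpNorm p g = A ^ (1/p) := by
    rw [_root_.lpNorm, intInt_eq fun x => |g x| ^ p]
  rw [_root_.lpNorm, intInt_eq fun x => |f x| ^ p, hgnorm]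
  calc (∫ x, |f x| ^ p ∂ν) ^ (1/p)
      ≤ (C ^ p * A) ^ (1/p) :=
        Real.rpow_le_rpow (integral_nonneg fun x => Real.rpow_nonneg (abs_nonneg _) _)
          main (by positivity)
    _ = C * A ^ (1/p) := by
        rw [Real.mul_rpow (Real.rpow_nonneg hC _) hA, ← Real.rpow_mul hC,
          mul_one_div_cancel hp0.ne', Real.rpow_one]

lemma absdiff {P Q : Polynomial ℝ}
    (hPQ : ∀ u ∈ Icc (-1:ℝ) 1, P.eval u ≤ stepPhi u ∧ stepPhi u ≤ Q.eval u)
    {ρ g : ℝ → ℝ}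
    (hgi : Integrable g (volume.restrict (Icc (0:ℝ) 1)))
    (hρ : ∀ x ∈ Icc (0:ℝ) 1, ρ x = ρ 0 + ∫ t in (0:ℝ)..x, g t)
    {x : ℝ} (hx : x ∈ Icc (0:ℝ) 1) :
    |ρ x - Mop P Q (ρ 0) g x| ≤
      (∫ t in Icc (0:ℝ) 1, (Q.eval (x - t) - P.eval (x - t)) * |g t|) ∧
    |ρ x - Nop P Q (ρ 0) g x| ≤
      (∫ t in Icc (0:ℝ) 1, (Q.eval (x - t) - P.eval (x - t)) * |g t|) := by
  have hgp : Integrable (fun t => max (g t) 0) (volume.restrict (Icc (0:ℝ) 1)) := hgi.pos_part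
  have hgm : Integrable (fun t => max (-g t) 0) (volume.restrict (Icc (0:ℝ) 1)) :=
    hgi.neg.pos_part
  have polymul : ∀ (R : Polynomial ℝ) (w : ℝ → ℝ),
      Integrable w (volume.restrict (Icc (0:ℝ) 1)) →
      Integrable (fun t => R.eval (x - t) * w t) (volume.restrict (Icc (0:ℝ) 1)) := by
    intro R w hw
    obtain ⟨c, hc⟩ := isCompact_Icc.exists_bound_of_continuousOn (s := Icc (-1:ℝ) 1)
      (R.continuous_aeval).continuousOn
    apply hw.bdd_mul ((R.continuous_aeval.comp
      (continuous_const.sub continuous_id)).aestronglyMeasurable) (c := c)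
    filter_upwards [ae_restrict_mem measurableSet_Icc] with t ht
    show ‖R.eval (x - t)‖ ≤ c
    exact hc _ ⟨by linarith [hx.1, ht.2], by linarith [hx.2, ht.1]⟩
  have hφmeas : Measurable fun t => stepPhi (x - t) := by
    have h1 : Measurable stepPhi := by
      unfold stepPhi
      exact Measurable.ite measurableSet_Ioi measurable_const measurable_const
    exact h1.comp (measurable_const.sub measurable_id)
  have φmul : ∀ (w : ℝ → ℝ), Integrable w (volume.restrict (Icc (0:ℝ) 1)) →
      Integrable (fun t => stepPhi (x - t) * w t) (volume.restrict (Icc (0:ℝ) 1)) := by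
    intro w hw
    apply hw.bdd_mul hφmeas.aestronglyMeasurable (c := 1)
    apply Filter.Eventually.of_forall; intro t
    show ‖stepPhi (x - t)‖ ≤ 1
    rw [Real.norm_eq_abs]
    unfold stepPhi; split <;> simp
  have iPgp := polymul P _ hgp
  have iQgp := polymul Q _ hgp
  have iPgm := polymul P _ hgm
  have iQgm := polymul Q _ hgm
  have iφgp := φmul _ hgp
  have iφgm := φmul _ hgm
  have iB : Integrable (fun t => (Q.eval (x - t) - P.eval (x - t)) * |g t|)
      (volume.restrict (Icc (0:ℝ) 1)) := by
    have h := polymul (Q - P) _ hgi.abs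
    simpa [Polynomial.eval_sub] using h
  have hstep : ∫ t in Icc (0:ℝ) 1, stepPhi (x - t) * g t = ∫ t in (0:ℝ)..x, g t := step_repr hx
  have hsplit : ∫ t in Icc (0:ℝ) 1, stepPhi (x - t) * g t =
      (∫ t in Icc (0:ℝ) 1, stepPhi (x - t) * max (g t) 0)
        - ∫ t in Icc (0:ℝ) 1, stepPhi (x - t) * max (-g t) 0 := by
    rw [← integral_sub iφgp iφgm]
    congr 1
    funext t
    rw [← mul_sub, max_zero_sub_max_neg_zero_eq_self]
  -- membership facts, used for a.e. bounds
  have hae : ∀ᵐ t ∂(volume.restrict (Icc (0:ℝ) 1)),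
      P.eval (x - t) ≤ stepPhi (x - t) ∧ stepPhi (x - t) ≤ Q.eval (x - t) := by
    filter_upwards [ae_restrict_mem measurableSet_Icc] with t ht
    exact hPQ _ ⟨by linarith [hx.1, ht.2], by linarith [hx.2, ht.1]⟩
  constructor
  · -- M case
    have eM : ρ x - Mop P Q (ρ 0) g x =
        ∫ t in Icc (0:ℝ) 1, ((stepPhi (x - t) - P.eval (x - t)) * max (g t) 0
          + (Q.eval (x - t) - stepPhi (x - t)) * max (-g t) 0) := by
      have eA : ∫ t in Icc (0:ℝ) 1, ((stepPhi (x - t) - P.eval (x - t)) * max (g t) 0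
            + (Q.eval (x - t) - stepPhi (x - t)) * max (-g t) 0)
          = ((∫ t in Icc (0:ℝ) 1, stepPhi (x - t) * max (g t) 0)
              - ∫ t in Icc (0:ℝ) 1, P.eval (x - t) * max (g t) 0)
            + ((∫ t in Icc (0:ℝ) 1, Q.eval (x - t) * max (-g t) 0)
              - ∫ t in Icc (0:ℝ) 1, stepPhi (x - t) * max (-g t) 0) := by
        have h1 : Integrable (fun t => stepPhi (x - t) * max (g t) 0
            - P.eval (x - t) * max (g t) 0) (volume.restrict (Icc (0:ℝ) 1)) := iφgp.sub iPgp
        have h2 : Integrable (fun t => Q.eval (x - t) * max (-g t) 0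
            - stepPhi (x - t) * max (-g t) 0) (volume.restrict (Icc (0:ℝ) 1)) := iQgm.sub iφgm
        simp only [sub_mul]
        rw [integral_add h1 h2, integral_sub iφgp iPgp, integral_sub iQgm iφgm]
      rw [eA, hρ x hx]
      simp only [Mop]
      rw [intInt_eq (fun t => P.eval (x - t) * max (g t) 0),
        intInt_eq (fun t => Q.eval (x - t) * max (-g t) 0), ← hstep, hsplit]
      ring
    have hDnn : 0 ≤ ρ x - Mop P Q (ρ 0) g x := by
      rw [eM]
      apply integral_nonneg_of_ae
      filter_upwards [hae] with t ht
      exact add_nonneg (mul_nonneg (by linarith [ht.1]) (le_max_right _ _))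
        (mul_nonneg (by linarith [ht.2]) (le_max_right _ _))
    rw [abs_of_nonneg hDnn, eM]
    have iDM : Integrable (fun t => (stepPhi (x - t) - P.eval (x - t)) * max (g t) 0
        + (Q.eval (x - t) - stepPhi (x - t)) * max (-g t) 0) (volume.restrict (Icc (0:ℝ) 1)) := by
      apply Integrable.congr ((iφgp.sub iPgp).add (iQgm.sub iφgm))
      apply Filter.Eventually.of_forall; intro t
      simp only [Pi.add_apply, Pi.sub_apply]; ring
    apply integral_mono_ae iDM iB ?_
    filter_upwards [hae] with t ht
    have habs : |g t| = max (g t) 0 + max (-g t) 0 :=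
      (max_zero_add_max_neg_zero_eq_abs_self _).symm
    rw [habs, mul_add]
    exact add_le_add (mul_le_mul_of_nonneg_right (by linarith [ht.2]) (le_max_right _ _))
      (mul_le_mul_of_nonneg_right (by linarith [ht.1]) (le_max_right _ _))
  · -- N case
    have eN : ρ x - Nop P Q (ρ 0) g x =
        -∫ t in Icc (0:ℝ) 1, ((Q.eval (x - t) - stepPhi (x - t)) * max (g t) 0
          + (stepPhi (x - t) - P.eval (x - t)) * max (-g t) 0) := by
      have eA : ∫ t in Icc (0:ℝ) 1, ((Q.eval (x - t) - stepPhi (x - t)) * max (g t) 0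
            + (stepPhi (x - t) - P.eval (x - t)) * max (-g t) 0)
          = ((∫ t in Icc (0:ℝ) 1, Q.eval (x - t) * max (g t) 0)
              - ∫ t in Icc (0:ℝ) 1, stepPhi (x - t) * max (g t) 0)
            + ((∫ t in Icc (0:ℝ) 1, stepPhi (x - t) * max (-g t) 0)
              - ∫ t in Icc (0:ℝ) 1, P.eval (x - t) * max (-g t) 0) := by
        have h1 : Integrable (fun t => Q.eval (x - t) * max (g t) 0
            - stepPhi (x - t) * max (g t) 0) (volume.restrict (Icc (0:ℝ) 1)) := iQgp.sub iφgp
        have h2 : Integrable (fun t => stepPhi (x - t) * max (-g t) 0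
            - P.eval (x - t) * max (-g t) 0) (volume.restrict (Icc (0:ℝ) 1)) := iφgm.sub iPgm
        simp only [sub_mul]
        rw [integral_add h1 h2, integral_sub iQgp iφgp, integral_sub iφgm iPgm]
      rw [eA, hρ x hx]
      simp only [Nop]
      rw [intInt_eq (fun t => Q.eval (x - t) * max (g t) 0),
        intInt_eq (fun t => P.eval (x - t) * max (-g t) 0), ← hstep, hsplit]
      ring
    have hDnn : 0 ≤ ∫ t in Icc (0:ℝ) 1, ((Q.eval (x - t) - stepPhi (x - t)) * max (g t) 0
        + (stepPhi (x - t) - P.eval (x - t)) * max (-g t) 0) := by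
      apply integral_nonneg_of_ae
      filter_upwards [hae] with t ht
      exact add_nonneg (mul_nonneg (by linarith [ht.2]) (le_max_right _ _))
        (mul_nonneg (by linarith [ht.1]) (le_max_right _ _))
    rw [eN, abs_neg, abs_of_nonneg hDnn]
    have iDN : Integrable (fun t => (Q.eval (x - t) - stepPhi (x - t)) * max (g t) 0
        + (stepPhi (x - t) - P.eval (x - t)) * max (-g t) 0) (volume.restrict (Icc (0:ℝ) 1)) := by
      apply Integrable.congr ((iQgp.sub iφgp).add (iφgm.sub iPgm))
      apply Filter.Eventually.of_forall; intro t
      simp only [Pi.add_apply, Pi.sub_apply]; ring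
    apply integral_mono_ae iDN iB ?_
    filter_upwards [hae] with t ht
    have habs : |g t| = max (g t) 0 + max (-g t) 0 :=
      (max_zero_add_max_neg_zero_eq_abs_self _).symm
    rw [habs, mul_add]
    exact add_le_add (mul_le_mul_of_nonneg_right (by linarith [ht.1]) (le_max_right _ _))
      (mul_le_mul_of_nonneg_right (by linarith [ht.2]) (le_max_right _ _))

/-- Lemma 3.4. -/
theorem stmt5 (p : ℝ) (hp : 1 ≤ p) (k : ℕ) (hk : 2 ≤ k) (P Q : Polynomial ℝ)
    (hPdeg : P.natDegree ≤ k) (hQdeg : Q.natDegree ≤ k)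
    (hPQ : ∀ u ∈ Icc (-1:ℝ) 1, P.eval u ≤ stepPhi u ∧ stepPhi u ≤ Q.eval u)
    (ρ g : ℝ → ℝ)
    (hg : MemLp g (ENNReal.ofReal p) (volume.restrict (Icc (0:ℝ) 1)))
    (hρ : ∀ x ∈ Icc (0:ℝ) 1, ρ x = ρ 0 + ∫ t in (0:ℝ)..x, g t) :
    max (lpNorm p (fun x => ρ x - Mop P Q (ρ 0) g x))
        (lpNorm p (fun x => ρ x - Nop P Q (ρ 0) g x)) ≤
      (∫ u in (-1:ℝ)..1, (Q.eval u - P.eval u)) * lpNorm p g := by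
  have hgi : Integrable g (volume.restrict (Icc (0:ℝ) 1)) :=
    hg.integrable (ENNReal.one_le_ofReal.mpr hp)
  have hKc : Continuous fun u => Q.eval u - P.eval u :=
    Q.continuous_aeval.sub P.continuous_aeval
  have hKnn : ∀ u ∈ Icc (-1:ℝ) 1, 0 ≤ (fun u => Q.eval u - P.eval u) u := by
    intro u hu; obtain ⟨h1, h2⟩ := hPQ u hu; simp only; linarith
  apply max_le
  · exact core hp hKc hKnn hg (fun x hx => (absdiff hPQ hgi hρ hx).1)
  · exact core hp hKc hKnn hg (fun x hx => (absdiff hPQ hgi hρ hx).2)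
end

section
/- Let 1 ≤ p < ∞, let ρ : [0,1] → ℝ be bounded and measurable, and let y ∈ (0,1). Then ‖ρ − H_y(ρ)‖_p ≤ 2 (1 − y)^{−1/p} τ(ρ, y)_p. (Theorem 4.1, estimate for H_y.) -/
open MeasureTheory Set Real

/-! For `x ∈ [0,1]` each point `s = (1 - y) x + y t` with `t ∈ [0,1]` lies in `[0,1]` within
distance `y` of `x`, so `|ρ x - ρ s - ω(ρ, s, y)| ≤ 2 ω(ρ, s, y)` and
`|ρ x - H_y(ρ, x)| ≤ 2 ∫₀¹ ω(ρ, (1 - y) x + y t, y) dt`. Jensen's inequality moves the `p`-th power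
inside the `t`-integral; after exchanging the integrals, for fixed `t` the substitution
`x ↦ (1 - y) x + y t` has Jacobian `1 - y` and lands in `[0,1]`, which produces the factor
`(1 - y)⁻¹` in front of `τ(ρ, y)_p ^ p`. -/

section OmegaMod

variable {ρ : ℝ → ℝ} {M : ℝ}

theorem omegaMod_nonneg (ρ : ℝ → ℝ) (x δ : ℝ) : 0 ≤ omegaMod ρ x δ :=
  Real.sSup_nonneg (by rintro _ ⟨u, -, v, -, rfl⟩; exact abs_nonneg _)

theorem abs_sub_le_two_mul_of_abs_le (hM : ∀ x ∈ Icc (0:ℝ) 1, |ρ x| ≤ M) {u v : ℝ}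
    (hu : u ∈ Icc (0:ℝ) 1) (hv : v ∈ Icc (0:ℝ) 1) : |ρ u - ρ v| ≤ 2 * M := by
  linarith [abs_sub (ρ u) (ρ v), hM u hu, hM v hv]

theorem abs_sub_le_omegaMod (hM : ∀ x ∈ Icc (0:ℝ) 1, |ρ x| ≤ M) {x δ u v : ℝ}
    (hu : u ∈ Icc (x - δ) (x + δ) ∩ Icc (0:ℝ) 1) (hv : v ∈ Icc (x - δ) (x + δ) ∩ Icc (0:ℝ) 1) :
    |ρ u - ρ v| ≤ omegaMod ρ x δ :=
  le_csSup ⟨2 * M, by rintro _ ⟨u, hu, v, hv, rfl⟩; exact abs_sub_le_two_mul_of_abs_le hM hu.2 hv.2⟩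
    ⟨u, hu, v, hv, rfl⟩

theorem omegaMod_le (hM : ∀ x ∈ Icc (0:ℝ) 1, |ρ x| ≤ M) (x δ : ℝ) : omegaMod ρ x δ ≤ 2 * M :=
  Real.sSup_le (by rintro _ ⟨u, hu, v, hv, rfl⟩; exact abs_sub_le_two_mul_of_abs_le hM hu.2 hv.2)
    (by linarith [abs_nonneg (ρ 0), hM 0 ⟨le_rfl, zero_le_one⟩])

theorem lt_omegaMod_iff (hM : ∀ x ∈ Icc (0:ℝ) 1, |ρ x| ≤ M) {x δ c : ℝ} (hc : 0 ≤ c) :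
    c < omegaMod ρ x δ ↔ ∃ u ∈ Icc (x - δ) (x + δ) ∩ Icc (0:ℝ) 1,
      ∃ v ∈ Icc (x - δ) (x + δ) ∩ Icc (0:ℝ) 1, c < ρ u - ρ v := by
  constructor
  · contrapose!
    intro h
    refine Real.sSup_le ?_ hc
    rintro _ ⟨u, hu, v, hv, rfl⟩
    exact abs_sub_le_iff.2 ⟨h u hu v hv, h v hv u hu⟩
  · rintro ⟨u, hu, v, hv, h⟩
    exact h.trans_le ((le_abs_self _).trans (abs_sub_le_omegaMod hM hu hv))

/-- A union of closed intervals need not be closed, but this one is the open `δ`-neighbourhood of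
`E` together with two translates of `E`. -/
theorem MeasurableSet.biUnion_Icc_sub_add {E : Set ℝ} (hE : MeasurableSet E) {δ : ℝ}
    (hδ : 0 ≤ δ) : MeasurableSet (⋃ u ∈ E, Icc (u - δ) (u + δ)) := by
  have hsplit : ⋃ u ∈ E, Icc (u - δ) (u + δ) =
      (⋃ u ∈ E, Ioo (u - δ) (u + δ)) ∪ (· + δ) ⁻¹' E ∪ (· - δ) ⁻¹' E := by
    ext s
    simp only [mem_iUnion₂, mem_union, mem_preimage, exists_prop]
    constructor
    · rintro ⟨u, hu, h₁, h₂⟩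
      rcases h₁.eq_or_lt with h₁ | h₁
      · exact Or.inl (Or.inr (by rwa [← h₁, sub_add_cancel]))
      rcases h₂.eq_or_lt with h₂ | h₂
      · exact Or.inr (by rwa [h₂, add_sub_cancel_right])
      exact Or.inl (Or.inl ⟨u, hu, h₁, h₂⟩)
    · rintro ((⟨u, hu, h₁, h₂⟩ | h) | h)
      · exact ⟨u, hu, h₁.le, h₂.le⟩
      · exact ⟨s + δ, h, by linarith, by linarith⟩
      · exact ⟨s - δ, h, by linarith, by linarith⟩
  rw [hsplit]
  exact ((isOpen_biUnion fun _ _ => isOpen_Ioo).measurableSet.union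
    (hE.preimage (measurable_add_const δ))).union (hE.preimage (measurable_sub_const δ))

theorem measurable_omegaMod (hρ : Measurable ρ) (hM : ∀ x ∈ Icc (0:ℝ) 1, |ρ x| ≤ M) {δ : ℝ}
    (hδ : 0 ≤ δ) : Measurable fun x => omegaMod ρ x δ := by
  refine measurable_of_Ioi fun c => ?_
  rcases lt_or_ge c 0 with hc | hc
  · convert MeasurableSet.univ
    exact eq_univ_of_forall fun x => hc.trans_le (omegaMod_nonneg ρ x δ)
  have hwindow : ∀ x u, u ∈ Icc (x - δ) (x + δ) ↔ x ∈ Icc (u - δ) (u + δ) := fun x u => by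
    simp only [mem_Icc]; constructor <;> rintro ⟨h₁, h₂⟩ <;> constructor <;> linarith
  have hpre : (fun x => omegaMod ρ x δ) ⁻¹' Ioi c = ⋃ q : ℚ,
      (⋃ u ∈ {u ∈ Icc (0:ℝ) 1 | (q:ℝ) + c < ρ u}, Icc (u - δ) (u + δ)) ∩
        ⋃ v ∈ {v ∈ Icc (0:ℝ) 1 | ρ v < q}, Icc (v - δ) (v + δ) := by
    ext x
    simp only [mem_preimage, mem_Ioi, lt_omegaMod_iff hM hc, mem_iUnion, mem_inter_iff,
      mem_ofPred_eq, exists_prop, hwindow x]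
    constructor
    · rintro ⟨u, ⟨hxu, hu⟩, v, ⟨hxv, hv⟩, h⟩
      obtain ⟨q, hq₁, hq₂⟩ := exists_rat_btwn (show ρ v < ρ u - c by linarith)
      exact ⟨q, ⟨u, ⟨hu, by linarith⟩, hxu⟩, v, ⟨hv, hq₁⟩, hxv⟩
    · rintro ⟨q, ⟨u, ⟨hu, hqu⟩, hxu⟩, v, ⟨hv, hqv⟩, hxv⟩
      exact ⟨u, ⟨hxu, hu⟩, v, ⟨hxv, hv⟩, by linarith⟩
  rw [hpre]
  exact .iUnion fun q =>
    ((measurableSet_Icc.inter (hρ measurableSet_Ioi)).biUnion_Icc_sub_add hδ).inter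
      ((measurableSet_Icc.inter (hρ measurableSet_Iio)).biUnion_Icc_sub_add hδ)

end OmegaMod

theorem intervalIntegrable_of_abs_le {f : ℝ → ℝ} (hf : Measurable f) {a b C : ℝ} (hab : a ≤ b)
    (hC : ∀ x ∈ Icc a b, |f x| ≤ C) : IntervalIntegrable f volume a b := by
  refine IntegrableOn.intervalIntegrable
    (Measure.integrableOn_of_bounded (M := C) (by simp) hf.aestronglyMeasurable ?_)
  rw [uIcc_of_le hab]
  exact (ae_restrict_iff' measurableSet_Icc).2 (ae_of_all _ hC)

theorem convexComb_mem_unitInterval {x t y : ℝ} (hx : x ∈ Icc (0:ℝ) 1) (ht : t ∈ Icc (0:ℝ) 1)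
    (hy : y ∈ Icc (0:ℝ) 1) : (1 - y) * x + y * t ∈ Icc (0:ℝ) 1 :=
  convex_Icc 0 1 hx ht (sub_nonneg.2 hy.2) hy.1 (sub_add_cancel 1 y)

theorem mem_Icc_convexComb_sub_add {x t y : ℝ} (hx : x ∈ Icc (0:ℝ) 1) (ht : t ∈ Icc (0:ℝ) 1)
    (hy : 0 ≤ y) : x ∈ Icc ((1 - y) * x + y * t - y) ((1 - y) * x + y * t + y) :=
  ⟨by nlinarith [ht.2, hx.1], by nlinarith [ht.1, hx.2]⟩

theorem abs_sub_Hop_le {ρ : ℝ → ℝ} {M y x : ℝ} (hρ : Measurable ρ)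
    (hM : ∀ x ∈ Icc (0:ℝ) 1, |ρ x| ≤ M) (hy : y ∈ Icc (0:ℝ) 1) (hx : x ∈ Icc (0:ℝ) 1) :
    |ρ x - Hop y ρ x| ≤ 2 * ∫ t in (0:ℝ)..1, omegaMod ρ ((1 - y) * x + y * t) y := by
  set s : ℝ → ℝ := fun t => (1 - y) * x + y * t
  have hs_mem : ∀ t ∈ Icc (0:ℝ) 1, s t ∈ Icc (0:ℝ) 1 := fun t ht =>
    convexComb_mem_unitInterval hx ht hy
  have hs_meas : Measurable s := by fun_prop
  have hρs : IntervalIntegrable (fun t => ρ (s t)) volume 0 1 :=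
    intervalIntegrable_of_abs_le (hρ.comp hs_meas) zero_le_one fun t ht => hM _ (hs_mem t ht)
  have hωs : IntervalIntegrable (fun t => omegaMod ρ (s t) y) volume 0 1 :=
    intervalIntegrable_of_abs_le ((measurable_omegaMod hρ hM hy.1).comp hs_meas) zero_le_one
      fun t _ => (abs_of_nonneg (omegaMod_nonneg ρ _ y)).trans_le (omegaMod_le hM _ y)
  -- `x` and `s t` both lie in the window of radius `y` around `s t`.
  have hpoint : ∀ t ∈ Icc (0:ℝ) 1,
      |ρ x - (ρ (s t) + omegaMod ρ (s t) y)| ≤ 2 * omegaMod ρ (s t) y := by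
    intro t ht
    have hxs : |ρ x - ρ (s t)| ≤ omegaMod ρ (s t) y := by
      refine abs_sub_le_omegaMod hM ⟨mem_Icc_convexComb_sub_add hx ht hy.1, hx⟩
        ⟨⟨?_, ?_⟩, hs_mem t ht⟩ <;> linarith [hy.1]
    calc |ρ x - (ρ (s t) + omegaMod ρ (s t) y)|
        ≤ |ρ x - ρ (s t)| + |omegaMod ρ (s t) y| := by
          rw [← sub_sub]; exact abs_sub _ _
      _ ≤ 2 * omegaMod ρ (s t) y := by
          rw [abs_of_nonneg (omegaMod_nonneg ρ _ y)]; linarith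
  calc |ρ x - Hop y ρ x|
      = |∫ t in (0:ℝ)..1, (ρ x - (ρ (s t) + omegaMod ρ (s t) y))| := by
        rw [intervalIntegral.integral_sub intervalIntegrable_const (hρs.add hωs),
          intervalIntegral.integral_const, Hop]
        simp [s]
    _ ≤ ∫ t in (0:ℝ)..1, 2 * omegaMod ρ (s t) y := by
        simpa only [Real.norm_eq_abs] using intervalIntegral.norm_integral_le_of_norm_le
          zero_le_one (ae_of_all _ fun t ht => (Real.norm_eq_abs _).trans_le
            (hpoint t (Ioc_subset_Icc_self ht))) (hωs.const_mul 2)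
    _ = 2 * ∫ t in (0:ℝ)..1, omegaMod ρ (s t) y := intervalIntegral.integral_const_mul _ _

theorem rpow_intervalIntegral_zero_one_le {f : ℝ → ℝ} {p : ℝ} (hp : 1 ≤ p) (hf₀ : ∀ t, 0 ≤ f t)
    (hf : IntervalIntegrable f volume 0 1)
    (hfp : IntervalIntegrable (fun t => f t ^ p) volume 0 1) :
    (∫ t in (0:ℝ)..1, f t) ^ p ≤ ∫ t in (0:ℝ)..1, f t ^ p := by
  have : IsProbabilityMeasure (volume.restrict (Ioc (0:ℝ) 1)) := ⟨by simp⟩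
  simp only [intervalIntegral.integral_of_le zero_le_one]
  exact (convexOn_rpow hp).map_integral_le (continuous_rpow_const (by linarith)).continuousOn
    isClosed_Ici (ae_of_all _ hf₀) hf.1 hfp.1

section ConvexCombAverage

variable {w : ℝ → ℝ} {C : ℝ}

theorem integrable_comp_convexComb (hw : Measurable w) (hC : ∀ u, |w u| ≤ C) (y : ℝ) :
    Integrable (fun z : ℝ × ℝ => w ((1 - y) * z.1 + y * z.2))
      ((volume.restrict (Ioc (0:ℝ) 1)).prod (volume.restrict (Ioc (0:ℝ) 1))) :=
  .of_bound (hw.comp (by fun_prop)).aestronglyMeasurable C (ae_of_all _ fun _ => hC _)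

theorem integrableOn_integral_comp_convexComb (hw : Measurable w) (hC : ∀ u, |w u| ≤ C)
    (y : ℝ) : IntegrableOn (fun x => ∫ t in (0:ℝ)..1, w ((1 - y) * x + y * t)) (Ioc 0 1) := by
  simp only [intervalIntegral.integral_of_le zero_le_one]
  exact
    (integrable_comp_convexComb hw hC y).integral_prod_left

theorem integral_integral_comp_convexComb_le (hw : Measurable w) (hw₀ : ∀ u, 0 ≤ w u)
    (hC : ∀ u, |w u| ≤ C) {y : ℝ} (hy : y ∈ Ico (0:ℝ) 1) :
    ∫ x in (0:ℝ)..1, ∫ t in (0:ℝ)..1, w ((1 - y) * x + y * t) ≤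
      (1 - y)⁻¹ * ∫ u in (0:ℝ)..1, w u := by
  have h1y : 0 < 1 - y := sub_pos.2 hy.2
  have hwint : IntervalIntegrable w volume 0 1 :=
    intervalIntegrable_of_abs_le hw zero_le_one fun u _ => hC u
  -- For fixed `t`, the map `x ↦ (1 - y) x + y t` sends `[0,1]` onto `[y t, y t + 1 - y] ⊆ [0,1]`.
  have hinner : ∀ t ∈ Ioc (0:ℝ) 1,
      ∫ x in (0:ℝ)..1, w ((1 - y) * x + y * t) ≤ (1 - y)⁻¹ * ∫ u in (0:ℝ)..1, w u := by
    intro t ht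
    rw [intervalIntegral.integral_comp_mul_add w h1y.ne', smul_eq_mul]
    refine mul_le_mul_of_nonneg_left (intervalIntegral.integral_mono_interval ?_ ?_ ?_
      (ae_of_all _ hw₀) hwint) (inv_nonneg.2 h1y.le)
    all_goals nlinarith [hy.1, ht.1, ht.2]
  calc ∫ x in (0:ℝ)..1, ∫ t in (0:ℝ)..1, w ((1 - y) * x + y * t)
      = ∫ t in Ioc (0:ℝ) 1, ∫ x in (0:ℝ)..1, w ((1 - y) * x + y * t) := by
        simp only [intervalIntegral.integral_of_le zero_le_one]
        exact integral_integral_swap (f := fun x t => w ((1 - y) * x + y * t))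
          (integrable_comp_convexComb hw hC y)
    _ ≤ ∫ t in Ioc (0:ℝ) 1, (1 - y)⁻¹ * ∫ u in (0:ℝ)..1, w u :=
        integral_mono_of_nonneg
          (ae_of_all _ fun t => intervalIntegral.integral_nonneg zero_le_one fun _ _ => hw₀ _)
          (integrable_const _) ((ae_restrict_iff' measurableSet_Ioc).2 (ae_of_all _ hinner))
    _ = (1 - y)⁻¹ * ∫ u in (0:ℝ)..1, w u := by simp

end ConvexCombAverage

theorem lpNorm_le_mul_of_integral_le {p c : ℝ} (hp : 0 < p) (hc : 0 ≤ c) {f g : ℝ → ℝ}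
    (h : ∫ x in (0:ℝ)..1, |f x| ^ p ≤ c ^ p * ∫ x in (0:ℝ)..1, |g x| ^ p) :
    lpNorm p f ≤ c * lpNorm p g := by
  have hg : 0 ≤ ∫ x in (0:ℝ)..1, |g x| ^ p :=
    intervalIntegral.integral_nonneg zero_le_one fun _ _ => by positivity
  calc lpNorm p f ≤ (c ^ p * ∫ x in (0:ℝ)..1, |g x| ^ p) ^ (1 / p) :=
        rpow_le_rpow (intervalIntegral.integral_nonneg zero_le_one fun _ _ => by positivity) h
          (by positivity)
    _ = c * (∫ x in (0:ℝ)..1, |g x| ^ p) ^ (1 / p) := by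
        rw [mul_rpow (by positivity) hg, ← rpow_mul hc, mul_one_div_cancel hp.ne', rpow_one]

theorem integral_abs_sub_Hop_rpow_le {ρ : ℝ → ℝ} {M p y : ℝ} (hp : 1 ≤ p) (hρ : Measurable ρ)
    (hM : ∀ x ∈ Icc (0:ℝ) 1, |ρ x| ≤ M) (hy : y ∈ Ioo (0:ℝ) 1) :
    ∫ x in (0:ℝ)..1, |ρ x - Hop y ρ x| ^ p ≤
      2 ^ p * (1 - y)⁻¹ * ∫ x in (0:ℝ)..1, |omegaMod ρ x y| ^ p := by
  have hp₀ : 0 < p := by linarith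
  have hω₀ : ∀ u, 0 ≤ omegaMod ρ u y := fun u => omegaMod_nonneg ρ u y
  have hω_meas : Measurable fun u => omegaMod ρ u y := measurable_omegaMod hρ hM hy.1.le
  have hωp_meas : Measurable fun u => omegaMod ρ u y ^ p := hω_meas.pow_const p
  have hωp_bound : ∀ u, |omegaMod ρ u y ^ p| ≤ (2 * M) ^ p := fun u => by
    rw [abs_of_nonneg (rpow_nonneg (hω₀ u) p)]
    exact rpow_le_rpow (hω₀ u) (omegaMod_le hM u y) hp₀.le
  have hpoint : ∀ x ∈ Icc (0:ℝ) 1, |ρ x - Hop y ρ x| ^ p ≤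
      2 ^ p * ∫ t in (0:ℝ)..1, omegaMod ρ ((1 - y) * x + y * t) y ^ p := by
    intro x hx
    have hs_meas : Measurable fun t : ℝ => (1 - y) * x + y * t := by fun_prop
    calc |ρ x - Hop y ρ x| ^ p
        ≤ (2 * ∫ t in (0:ℝ)..1, omegaMod ρ ((1 - y) * x + y * t) y) ^ p :=
          rpow_le_rpow (abs_nonneg _) (abs_sub_Hop_le hρ hM (Ioo_subset_Icc_self hy) hx) hp₀.le
      _ = 2 ^ p * (∫ t in (0:ℝ)..1, omegaMod ρ ((1 - y) * x + y * t) y) ^ p :=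
          mul_rpow zero_le_two (intervalIntegral.integral_nonneg zero_le_one fun _ _ => hω₀ _)
      _ ≤ 2 ^ p * ∫ t in (0:ℝ)..1, omegaMod ρ ((1 - y) * x + y * t) y ^ p := by
          gcongr
          exact rpow_intervalIntegral_zero_one_le hp (fun _ => hω₀ _)
            (intervalIntegrable_of_abs_le (hω_meas.comp hs_meas) zero_le_one fun _ _ =>
              (abs_of_nonneg (hω₀ _)).trans_le (omegaMod_le hM _ y))
            (intervalIntegrable_of_abs_le (hωp_meas.comp hs_meas) zero_le_one fun _ _ =>
              hωp_bound _)
  calc ∫ x in (0:ℝ)..1, |ρ x - Hop y ρ x| ^ p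
      ≤ ∫ x in (0:ℝ)..1, 2 ^ p * ∫ t in (0:ℝ)..1, omegaMod ρ ((1 - y) * x + y * t) y ^ p := by
        rw [intervalIntegral.integral_of_le zero_le_one,
          intervalIntegral.integral_of_le zero_le_one]
        exact integral_mono_of_nonneg (ae_of_all _ fun _ => by positivity)
          ((integrableOn_integral_comp_convexComb hωp_meas hωp_bound y).const_mul _)
          ((ae_restrict_iff' measurableSet_Ioc).2
            (ae_of_all _ fun x hx => hpoint x (Ioc_subset_Icc_self hx)))
    _ = 2 ^ p * ∫ x in (0:ℝ)..1, ∫ t in (0:ℝ)..1, omegaMod ρ ((1 - y) * x + y * t) y ^ p :=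
        intervalIntegral.integral_const_mul _ _
    _ ≤ 2 ^ p * ((1 - y)⁻¹ * ∫ u in (0:ℝ)..1, omegaMod ρ u y ^ p) := by
        gcongr
        exact integral_integral_comp_convexComb_le hωp_meas (fun u => rpow_nonneg (hω₀ u) p)
          hωp_bound (Ioo_subset_Ico_self hy)
    _ = 2 ^ p * (1 - y)⁻¹ * ∫ x in (0:ℝ)..1, |omegaMod ρ x y| ^ p := by
        simp only [abs_of_nonneg (hω₀ _)]
        ring

/-- Theorem 4.1, estimate for `H_y`. -/
theorem stmt7 (p : ℝ) (hp : 1 ≤ p) (ρ : ℝ → ℝ) (hmeas : Measurable ρ)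
    (hbdd : ∃ M : ℝ, ∀ x ∈ Icc (0:ℝ) 1, |ρ x| ≤ M)
    (y : ℝ) (hy : y ∈ Ioo (0:ℝ) 1) :
    lpNorm p (fun x => ρ x - Hop y ρ x) ≤
      2 * (1 - y) ^ (-(1 / p) : ℝ) * tau p ρ y := by
  obtain ⟨M, hM⟩ := hbdd
  have hp₀ : 0 < p := by linarith
  have h1y : 0 < 1 - y := sub_pos.2 hy.2
  refine lpNorm_le_mul_of_integral_le hp₀ (by positivity) ?_
  rw [mul_rpow zero_le_two (rpow_nonneg h1y.le _), ← rpow_mul h1y.le, neg_mul, one_div,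
    inv_mul_cancel₀ hp₀.ne', rpow_neg_one]
  exact integral_abs_sub_Hop_rpow_le hp hmeas hM hy
end
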